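/- The resolvent kernel $H(t,s) = \sum_{n\ge 1} \kappa^{(n)}(t,s)$ of the Volterra kernel $\kappa(t,s) = \frac{\sigma^2}{\lambda^2+\sigma^2 t}\mathbb{1}_{s\le t}$ equals $H(t,s) = \frac{\sigma^2}{\lambda^2+\sigma^2 s}\mathbb{1}_{s\le t}$, i.e. the series of iterated kernels converges and sums to $\frac{\sigma^2}{\lambda^2+\sigma^2 t}\exp\left(\log\frac{\lambda^2+\sigma^2 t}{\lambda^2+\sigma^2 s}\right)\mathbb{1}_{s\le t}$. -/

import Mathlib

/-!
For a kernel `κ(t,v) = a(t) 1_{v ≤ t}` whose coefficient has an antiderivative `G`, induction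
gives `κ⁽ⁿ⁺¹⁾(t,s) = a(t) (G t - G s)ⁿ / n!`, so the resolvent is `a(t) exp (G t - G s)`.
Here `a(t) = σ²/(λ²+σ²t)` and `G = log (λ²+σ²·)`, which collapses `exp (G t - G s)` to
`(λ²+σ²t)/(λ²+σ²s)`.
-/

open intervalIntegral Set Nat

/-- Iterated Volterra kernels: `iterKer κ 0 = κ = κ⁽¹⁾`, and
`iterKer κ n = κ⁽ⁿ⁺¹⁾` with `κ⁽ⁿ⁺¹⁾(t,s) = ∫ₛᵗ κ(t,v) κ⁽ⁿ⁾(v,s) dv`. -/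
noncomputable def iterKer (κ : ℝ → ℝ → ℝ) : ℕ → ℝ → ℝ → ℝ
  | 0 => κ
  | n + 1 => fun t s => ∫ v in s..t, κ t v * iterKer κ n v s

section

variable {a G : ℝ → ℝ} {s : ℝ}

theorem integral_deriv_mul_pow_div_factorial {t : ℝ}
    (hG : ∀ v ∈ uIcc s t, HasDerivAt G (a v) v) (ha : ContinuousOn a (uIcc s t)) (n : ℕ) :
    ∫ v in s..t, a v * (G v - G s) ^ n / n ! = (G t - G s) ^ (n + 1) / (n + 1)! := by
  have hderiv : ∀ v ∈ uIcc s t,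
      HasDerivAt (fun v => (G v - G s) ^ (n + 1) / (n + 1)!) (a v * (G v - G s) ^ n / n !) v := by
    intro v hv
    refine ((((hG v hv).sub_const (G s)).pow (n + 1)).div_const ((n + 1)! : ℝ)).congr_deriv ?_
    rw [Nat.add_sub_cancel, factorial_succ]
    push_cast
    field_simp
  have hGcont : ContinuousOn G (uIcc s t) := fun v hv => (hG v hv).continuousAt.continuousWithinAt
  have hint : IntervalIntegrable (fun v => a v * (G v - G s) ^ n / n !) MeasureTheory.volume s t :=
    ((ha.mul ((hGcont.sub continuousOn_const).pow n)).div_const _).intervalIntegrable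
  rw [integral_eq_sub_of_hasDerivAt hderiv hint]
  simp

theorem iterKer_ite_eq (hG : ∀ v, s ≤ v → HasDerivAt G (a v) v) (ha : ContinuousOn a (Ici s))
    (n : ℕ) {t : ℝ} (hst : s ≤ t) :
    iterKer (fun t v => if v ≤ t then a t else 0) n t s = a t * (G t - G s) ^ n / n ! := by
  induction n generalizing t with
  | zero => simp [iterKer, hst]
  | succ n ih =>
    have hIcc : uIcc s t = Icc s t := uIcc_of_le hst
    have hcongr : EqOn (fun v => (if v ≤ t then a t else 0) *
          iterKer (fun t v => if v ≤ t then a t else 0) n v s)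
        (fun v => a t * (a v * (G v - G s) ^ n / n !)) (uIcc s t) := by
      intro v hv
      rw [hIcc] at hv
      simp only [if_pos hv.2, ih hv.1]
    dsimp only [iterKer]
    rw [integral_congr hcongr, integral_const_mul,
      integral_deriv_mul_pow_div_factorial (fun v hv => hG v (by rw [hIcc] at hv; exact hv.1))
        (ha.mono (by rw [hIcc]; exact Icc_subset_Ici_self))]
    ring

theorem hasSum_iterKer_ite (hG : ∀ v, s ≤ v → HasDerivAt G (a v) v) (ha : ContinuousOn a (Ici s))
    {t : ℝ} (hst : s ≤ t) :
    HasSum (fun n => iterKer (fun t v => if v ≤ t then a t else 0) n t s)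
      (a t * Real.exp (G t - G s)) := by
  simp_rw [iterKer_ite_eq hG ha _ hst, mul_div_assoc, Real.exp_eq_exp_ℝ]
  exact (NormedSpace.expSeries_div_hasSum_exp (G t - G s)).mul_left (a t)

theorem summable_abs_iterKer_ite (hG : ∀ v, s ≤ v → HasDerivAt G (a v) v)
    (ha : ContinuousOn a (Ici s)) {t : ℝ} (hst : s ≤ t) :
    Summable fun n => |iterKer (fun t v => if v ≤ t then a t else 0) n t s| := by
  simp_rw [iterKer_ite_eq hG ha _ hst, abs_div, abs_mul, abs_pow, Nat.abs_cast, mul_div_assoc]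
  exact (Real.summable_pow_div_factorial |G t - G s|).mul_left |a t|

end

theorem resolvent_kernel_formula_general (σ lam : ℝ) (hlam : lam ≠ 0)
    (κ : ℝ → ℝ → ℝ)
    (hκ : κ = fun t s => if s ≤ t then σ^2 / (lam^2 + σ^2 * t) else 0) :
    ∀ s t : ℝ, 0 ≤ s → s ≤ t →
      (Summable fun n : ℕ => |iterKer κ n t s|) ∧
      HasSum (fun n : ℕ => iterKer κ n t s) (σ^2 / (lam^2 + σ^2 * s)) ∧
      σ^2 / (lam^2 + σ^2 * s)
        = σ^2 / (lam^2 + σ^2 * t)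
          * Real.exp (Real.log ((lam^2 + σ^2 * t) / (lam^2 + σ^2 * s))) := by
  intro s t hs hst
  subst hκ
  have hpos : ∀ v, s ≤ v → 0 < lam ^ 2 + σ ^ 2 * v := fun v hv => by
    have := hs.trans hv
    positivity
  have hG : ∀ v, s ≤ v →
      HasDerivAt (fun v => Real.log (lam ^ 2 + σ ^ 2 * v)) (σ ^ 2 / (lam ^ 2 + σ ^ 2 * v)) v :=
    fun v hv => by
      simpa using (((hasDerivAt_id v).const_mul (σ ^ 2)).const_add (lam ^ 2)).log (hpos v hv).ne'
  have ha : ContinuousOn (fun v => σ ^ 2 / (lam ^ 2 + σ ^ 2 * v)) (Ici s) :=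
    continuousOn_const.div (by fun_prop) fun v hv => (hpos v hv).ne'
  have hexp : σ ^ 2 / (lam ^ 2 + σ ^ 2 * s) = σ ^ 2 / (lam ^ 2 + σ ^ 2 * t)
      * Real.exp (Real.log ((lam ^ 2 + σ ^ 2 * t) / (lam ^ 2 + σ ^ 2 * s))) := by
    rw [Real.exp_log (div_pos (hpos t hst) (hpos s le_rfl))]
    field_simp [(hpos t hst).ne']
  have hsum := hasSum_iterKer_ite hG ha hst
  rw [← Real.log_div (hpos t hst).ne' (hpos s le_rfl).ne', ← hexp] at hsum
  exact ⟨summable_abs_iterKer_ite hG ha hst, hsum, hexp⟩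

/-- The resolvent kernel `H(t,s) = ∑_{n≥1} κ⁽ⁿ⁾(t,s)` of the Volterra kernel
`κ(t,s) = σ²/(λ²+σ²t) 1_{s≤t}`: the series of iterated kernels converges absolutely and
sums to `σ²/(λ²+σ²s) = σ²/(λ²+σ²t) · exp(log((λ²+σ²t)/(λ²+σ²s)))` for `0 ≤ s ≤ t`. -/
theorem resolvent_kernel_formula (σ lam : ℝ) (hσ : 0 < σ) (hlam : lam ≠ 0)
    (κ : ℝ → ℝ → ℝ)
    (hκ : κ = fun t s => if s ≤ t then σ^2 / (lam^2 + σ^2 * t) else 0) :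
    ∀ s t : ℝ, 0 ≤ s → s ≤ t →
      (Summable fun n : ℕ => |iterKer κ n t s|) ∧
      HasSum (fun n : ℕ => iterKer κ n t s) (σ^2 / (lam^2 + σ^2 * s)) ∧
      σ^2 / (lam^2 + σ^2 * s)
        = σ^2 / (lam^2 + σ^2 * t)
          * Real.exp (Real.log ((lam^2 + σ^2 * t) / (lam^2 + σ^2 * s))) :=
  resolvent_kernel_formula_general σ lam hlam κ hκ
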